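/- arXiv:0801.1530 — 6 statements merged into one kernel-verified Lean document; each statement's English description precedes it below -/
import Mathlib

section
/- Let J = diag(I_p, −I_q) be an N×N matrix with N = p + q. For any A ∈ GL_N(ℂ) and any integer s, the matrix X = A J A⁻¹ J satisfies tr(Xˢ J) = p − q. -/
/-!
`K = A J A⁻¹` and `J` are involutions with `X = K J`. Conjugating by `J` inverts `X`, so
`Xᵏ (Xʳ J) X⁻ᵏ = X²ᵏ⁺ʳ J`: hence `Xˢ J` is conjugate to `J` for even `s` and to `X J = K` for odd
`s`. Both are similar to `J`, whose trace is `p - q`.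
-/

open Matrix

theorem Matrix.trace_signDiagonal {R : Type*} [Ring R] (p q : ℕ) :
    trace (diagonal fun i : Fin (p + q) => if (i : ℕ) < p then (1 : R) else -1) = p - q := by
  simp [trace_diagonal, Fin.sum_univ_add, sub_eq_add_neg]

theorem Matrix.diagonal_mul_self_eq_one {n R : Type*} [Fintype n] [DecidableEq n] [Semiring R]
    {d : n → R} (hd : ∀ i, d i * d i = 1) : diagonal d * diagonal d = 1 := by
  rw [diagonal_mul_diagonal, ← diagonal_one]
  exact congrArg diagonal (funext hd)

theorem Matrix.trace_units_eq_of_isConj {n R : Type*} [Fintype n] [DecidableEq n] [CommRing R]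
    {u v : (Matrix n n R)ˣ} (h : IsConj u v) :
    trace (u : Matrix n n R) = trace (v : Matrix n n R) := by
  obtain ⟨c, rfl⟩ := isConj_iff.1 h
  simp only [Units.val_mul, trace_units_conj]

theorem isConj_zpow_mul_of_mul_self_eq_one {G : Type*} [Group G] {a b : G}
    (ha : a * a = 1) (hb : b * b = 1) (s : ℤ) :
    IsConj b ((a * b) ^ s * b) ∨ IsConj a ((a * b) ^ s * b) := by
  set x := a * b
  have hbx : SemiconjBy b x x⁻¹ := by
    rw [SemiconjBy, _root_.mul_inv_rev, inv_eq_of_mul_eq_one_right ha,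
      inv_eq_of_mul_eq_one_right hb]
    exact (mul_assoc b a b).symm
  have hconj : ∀ k r : ℤ, IsConj (x ^ r * b) (x ^ (2 * k + r) * b) := fun k r =>
    isConj_iff.2 ⟨x ^ k, calc
      x ^ k * (x ^ r * b) * (x ^ k)⁻¹ = x ^ (k + r) * (b * x ^ (-k)) := by group
      _ = x ^ (k + r) * (x ^ k * b) := by rw [(hbx.zpow_right (-k)).eq, _root_.inv_zpow', neg_neg]
      _ = x ^ (2 * k + r) * b := by group⟩
  obtain ⟨k, rfl | rfl⟩ := Int.even_or_odd' s
  · left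
    simpa using hconj k 0
  · right
    have hxb : x * b = a := by rw [mul_assoc, hb, mul_one]
    simpa [hxb] using hconj k 1

/-- `tr(Xˢ J) = p - q` for every integer `s`, where `X = A J A⁻¹ J`. -/
theorem stmt1 (p q N : ℕ) (hN : N = p + q)
    (J A X : Matrix (Fin N) (Fin N) ℂ)
    (hJ : J = Matrix.diagonal (fun i : Fin N => if (i : ℕ) < p then (1 : ℂ) else -1))
    (hA : IsUnit A)
    (hX : X = A * J * A⁻¹ * J)
    (s : ℤ) :
    Matrix.trace (X ^ s * J) = (p : ℂ) - (q : ℂ) := by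
  subst hN hX
  have hJJ : J * J = 1 := by
    rw [hJ]
    exact diagonal_mul_self_eq_one fun i => by split_ifs <;> norm_num
  have htrJ : trace J = p - q := hJ ▸ trace_signDiagonal p q
  obtain ⟨u, rfl⟩ := hA
  let j : (Matrix (Fin (p + q)) (Fin (p + q)) ℂ)ˣ := ⟨J, J, hJJ, hJJ⟩
  let k := u * j * u⁻¹
  have hjj : j * j = 1 := Units.ext hJJ
  have hkk : k * k = 1 := by rw [conj_mul, hjj, mul_one, mul_inv_cancel]
  have hXkj : (u : Matrix _ _ ℂ) * J * (u : Matrix _ _ ℂ)⁻¹ * J = (k * j).val := by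
    rw [← coe_units_inv]; rfl
  rw [hXkj, ← coe_units_zpow, ← htrJ]
  change trace ((k * j) ^ s * j).val = trace j.val
  rcases isConj_zpow_mul_of_mul_self_eq_one hkk hjj s with h | h
  · exact (trace_units_eq_of_isConj h).symm
  · rw [← trace_units_eq_of_isConj h]
    exact (trace_units_eq_of_isConj (isConj_iff.2 ⟨u, rfl⟩)).symm
end

section
/- With X = A J A⁻¹ J and X⁻¹ = J A J A⁻¹ (J = diag(I_p, −I_q), N = p+q), the matrix X + X⁻¹ is block diagonal: its (i,j) entry vanishes unless both i,j ≤ p or both i,j > p. Equivalently, (X)_{ij} = −(X⁻¹)_{ij} whenever exactly one of i,j lies in {1,…,p}. -/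
open Matrix

/-!
Since `J² = 1`, the inverse of `X = A J A⁻¹ J` is `J A J A⁻¹ = J X J`. Conjugating by the
diagonal sign matrix `J` multiplies the `(i, j)` entry by `J i i * J j j`, which is `-1` exactly
when `i` and `j` lie in different blocks; there `X⁻¹ i j = -X i j`.
-/

namespace Matrix

variable {n R : Type*} [Fintype n] [DecidableEq n] [CommRing R]

theorem diagonal_mul_self_eq_one_s5 {d : n → R} (hd : ∀ i, d i * d i = 1) :
    diagonal d * diagonal d = 1 := by
  rw [diagonal_mul_diagonal, ← diagonal_one]
  exact congrArg diagonal (funext hd)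

theorem inv_conj_mul_eq_conj {J A : Matrix n n R} (hJ : J * J = 1) (hA : IsUnit A) :
    (A * J * A⁻¹ * J)⁻¹ = J * (A * J * A⁻¹ * J) * J := by
  have hAA : A * A⁻¹ = 1 := mul_nonsing_inv A ((isUnit_iff_isUnit_det A).mp hA)
  have hA'A : A⁻¹ * A = 1 := nonsing_inv_mul A ((isUnit_iff_isUnit_det A).mp hA)
  have hconj : J * (A * J * A⁻¹ * J) * J = J * A * J * A⁻¹ := by
    simp only [mul_assoc, hJ, mul_one]
  rw [hconj]
  apply inv_eq_right_inv
  calc A * J * A⁻¹ * J * (J * A * J * A⁻¹)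
      = A * J * A⁻¹ * (J * J) * A * J * A⁻¹ := by simp only [mul_assoc]
    _ = A * J * (A⁻¹ * A) * J * A⁻¹ := by simp only [hJ, mul_one, mul_assoc]
    _ = 1 := by simp only [hA'A, mul_one, hJ, mul_assoc, hAA]

theorem diagonal_mul_mul_diagonal_apply (d : n → R) (M : Matrix n n R) (i j : n) :
    (diagonal d * M * diagonal d) i j = d i * M i j * d j := by
  rw [mul_diagonal, diagonal_mul]

end Matrix

theorem blockSign_mul_blockSign_of_not_iff {R : Type*} [Ring R] {p i j : ℕ}
    (hij : ¬ (i < p ↔ j < p)) :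
    (if i < p then (1 : R) else -1) * (if j < p then 1 else -1) = -1 := by
  by_cases hi : i < p <;> by_cases hj : j < p <;> simp_all

theorem stmt5_general (p N : ℕ)
    (J A X : Matrix (Fin N) (Fin N) ℂ)
    (hJ : J = Matrix.diagonal (fun i : Fin N => if (i : ℕ) < p then (1 : ℂ) else -1))
    (hA : IsUnit A)
    (hX : X = A * J * A⁻¹ * J) :
    ∀ i j : Fin N, ¬ (((i : ℕ) < p) ↔ ((j : ℕ) < p)) →
      (X + X⁻¹) i j = 0 ∧ X i j = -(X⁻¹ i j) := by
  intro i j hij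
  have hJ2 : J * J = 1 := hJ ▸ diagonal_mul_self_eq_one_s5 fun i => by split_ifs <;> norm_num
  have hXinv : X⁻¹ i j = -X i j := by
    rw [hX, inv_conj_mul_eq_conj hJ2 hA, ← hX, hJ, diagonal_mul_mul_diagonal_apply,
      mul_right_comm, blockSign_mul_blockSign_of_not_iff hij, neg_one_mul]
  exact ⟨by rw [Matrix.add_apply, hXinv, add_neg_cancel], by rw [hXinv, neg_neg]⟩

/-- `X + X⁻¹` is block diagonal: its (i,j) entry vanishes when exactly one of
i, j lies in the first block; equivalently `X i j = −(X⁻¹) i j` for such i, j. -/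
theorem stmt5 (p q N : ℕ) (hN : N = p + q)
    (J A X : Matrix (Fin N) (Fin N) ℂ)
    (hJ : J = Matrix.diagonal (fun i : Fin N => if (i : ℕ) < p then (1 : ℂ) else -1))
    (hA : IsUnit A)
    (hX : X = A * J * A⁻¹ * J) :
    ∀ i j : Fin N, ¬ (((i : ℕ) < p) ↔ ((j : ℕ) < p)) →
      (X + X⁻¹) i j = 0 ∧ X i j = -(X⁻¹ i j) :=
  stmt5_general p N J A X hJ hA hX
end

section
/- Let N = p+q, J = diag(I_p, −I_q), A ∈ GL_N(ℂ), X = A J A⁻¹ J, and let r, j be indices with both ≤ p or both > p. Set Q_{rj} = J A⁻¹ J E_{rj} A + A⁻¹ E_{rj} J A J and define χ on block diagonal matrices by χ(diag(X₁,X₂)) = q·tr(X₁) − p·tr(X₂). Then χ(Q_{rj}) = (q−p)/2 · (X + X⁻¹)_{jr} + N·δ_{rj} if r, j ≤ p, and χ(Q_{rj}) = (q−p)/2 · (X + X⁻¹)_{jr} − N·δ_{rj} if r, j > p. -/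
/-!
Write `S₁`, `S₂` for the traces of the two diagonal blocks of `x`. Then `tr x = S₁ + S₂` and
`tr (J x) = S₁ - S₂`, so `χ x = (q - p)/2 · tr x + N/2 · tr (J x)`. By cyclicity of the trace,
`tr Q = (A J A⁻¹ J)_{jr} + (J A J A⁻¹)_{jr} = (X + X⁻¹)_{jr}`, and since `J² = 1`,
`tr (J Q) = 2 J_{jr}`. Finally `J_{jr} = ±δ_{rj}` when `r`, `j` lie in the same block.
-/

open Matrix

def signDiag (R : Type*) [Ring R] (n p : ℕ) : Matrix (Fin n) (Fin n) R :=
  diagonal fun i => if (i : ℕ) < p then 1 else -1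

section Trace

variable {ι R : Type*} [Fintype ι] [DecidableEq ι] [CommRing R]

theorem trace_mul_single_one_mul (M N : Matrix ι ι R) (r j : ι) :
    trace (M * single r j 1 * N) = (N * M) j r := by
  rw [trace_mul_cycle, trace_mul_single, MulOpposite.op_one, one_smul]

theorem trace_conj_single_add (J A B : Matrix ι ι R) (r j : ι) :
    trace (J * B * J * single r j 1 * A + B * single r j 1 * J * A * J)
      = (A * J * B * J) j r + (J * A * J * B) j r := by
  rw [trace_add, trace_mul_single_one_mul,
    show B * single r j 1 * J * A * J = B * single r j 1 * (J * A * J) by simp only [mul_assoc],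
    trace_mul_single_one_mul]
  simp only [mul_assoc]

theorem trace_mul_conj_single_add {J A B : Matrix ι ι R} (hJ : J * J = 1) (hA : A * B = 1)
    (r j : ι) :
    trace (J * (J * B * J * single r j 1 * A + B * single r j 1 * J * A * J)) = 2 * J j r := by
  have hJ' (M : Matrix ι ι R) : J * (J * M) = M := by rw [← mul_assoc, hJ, one_mul]
  rw [mul_add, trace_add,
    show J * (J * B * J * single r j 1 * A) = J * J * B * J * single r j 1 * A by
      simp only [mul_assoc],
    show J * (B * single r j 1 * J * A * J) = J * B * single r j 1 * (J * A * J) by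
      simp only [mul_assoc],
    trace_mul_single_one_mul, trace_mul_single_one_mul]
  simp only [mul_assoc, hJ', ← mul_assoc A B, hA, one_mul, mul_one, two_mul]

theorem inv_mul_conj_involution {J A : Matrix ι ι R} (hJ : J * J = 1) (hA : IsUnit A) :
    (A * J * A⁻¹ * J)⁻¹ = J * A * J * A⁻¹ := by
  have hdet := (isUnit_iff_isUnit_det A).mp hA
  have hJ' (M : Matrix ι ι R) : J * (J * M) = M := by rw [← mul_assoc, hJ, one_mul]
  have hAA (M : Matrix ι ι R) : A⁻¹ * (A * M) = M := by
    rw [← mul_assoc, A.nonsing_inv_mul hdet, one_mul]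
  apply inv_eq_right_inv
  simp only [mul_assoc, hJ', hAA, A.mul_nonsing_inv hdet]

end Trace

section SignDiag

variable {R : Type*} [Ring R] {n : ℕ} (p : ℕ)

theorem signDiag_mul_self : signDiag R n p * signDiag R n p = 1 := by
  rw [signDiag, diagonal_mul_diagonal, ← diagonal_one]
  congr 1
  ext i
  split_ifs <;> simp

theorem trace_signDiag_mul (x : Matrix (Fin n) (Fin n) R) :
    trace (signDiag R n p * x)
      = ∑ i ∈ Finset.univ.filter (fun i : Fin n => (i : ℕ) < p), x i i
        - ∑ i ∈ Finset.univ.filter (fun i : Fin n => ¬ (i : ℕ) < p), x i i := by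
  rw [trace, ← Finset.sum_filter_add_sum_filter_not _ (fun i : Fin n => (i : ℕ) < p),
    sub_eq_add_neg, ← Finset.sum_neg_distrib]
  congr 1 <;> refine Finset.sum_congr rfl fun i hi => ?_ <;>
    simp_all [signDiag, diagonal_mul]

end SignDiag

theorem signDiag_apply_of_lt {R : Type*} [Ring R] {n p : ℕ} {i k : Fin n} (hi : (i : ℕ) < p) :
    signDiag R n p i k = if k = i then 1 else 0 := by
  rcases eq_or_ne k i with rfl | h <;> simp [signDiag, *, Ne.symm]

theorem signDiag_apply_of_not_lt {R : Type*} [Ring R] {n p : ℕ} {i k : Fin n}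
    (hi : ¬ (i : ℕ) < p) : signDiag R n p i k = -if k = i then 1 else 0 := by
  rcases eq_or_ne k i with rfl | h <;> simp [signDiag, *, Ne.symm]

/-- value of χ on `Q_{rj} = J A⁻¹ J E_{rj} A + A⁻¹ E_{rj} J A J` for
r, j in the same block. -/
theorem stmt7 (p q N : ℕ) (hN : N = p + q)
    (χ : Matrix (Fin N) (Fin N) ℂ → ℂ)
    (hχ : ∀ x : Matrix (Fin N) (Fin N) ℂ,
      χ x = (q : ℂ) * ∑ i ∈ Finset.univ.filter (fun i : Fin N => (i : ℕ) < p), x i i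
            - (p : ℂ) * ∑ i ∈ Finset.univ.filter (fun i : Fin N => ¬ (i : ℕ) < p), x i i)
    (J A X : Matrix (Fin N) (Fin N) ℂ)
    (hJ : J = Matrix.diagonal (fun i : Fin N => if (i : ℕ) < p then (1 : ℂ) else -1))
    (hA : IsUnit A)
    (hX : X = A * J * A⁻¹ * J)
    (r j : Fin N)
    (Q : Matrix (Fin N) (Fin N) ℂ)
    (hQ : Q = J * A⁻¹ * J * Matrix.single r j 1 * A
            + A⁻¹ * Matrix.single r j 1 * J * A * J) :
    ((r : ℕ) < p → (j : ℕ) < p →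
      χ Q = ((q : ℂ) - (p : ℂ)) / 2 * ((X + X⁻¹) j r)
            + (N : ℂ) * (if r = j then 1 else 0)) ∧
    (¬ (r : ℕ) < p → ¬ (j : ℕ) < p →
      χ Q = ((q : ℂ) - (p : ℂ)) / 2 * ((X + X⁻¹) j r)
            - (N : ℂ) * (if r = j then 1 else 0)) := by
  replace hJ : J = signDiag ℂ N p := hJ
  have hJJ : J * J = 1 := hJ ▸ signDiag_mul_self p
  have hAA : A * A⁻¹ = 1 := A.mul_nonsing_inv ((isUnit_iff_isUnit_det A).mp hA)
  have htrace : trace Q = X j r + X⁻¹ j r := by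
    rw [hQ, trace_conj_single_add, hX, inv_mul_conj_involution hJJ hA]
  have htraceJ : trace (J * Q) = 2 * J j r := hQ ▸ trace_mul_conj_single_add hJJ hAA r j
  have hsum : ∑ i ∈ Finset.univ.filter (fun i : Fin N => (i : ℕ) < p), Q i i
      + ∑ i ∈ Finset.univ.filter (fun i : Fin N => ¬ (i : ℕ) < p), Q i i = trace Q :=
    Finset.sum_filter_add_sum_filter_not _ _ _
  have hdiff := hJ ▸ trace_signDiag_mul (R := ℂ) p Q
  have hNpq : (N : ℂ) = p + q := by rw [hN, Nat.cast_add]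
  have hχQ : χ Q = ((q : ℂ) - p) / 2 * (X + X⁻¹) j r + N * J j r := by
    rw [hχ, Matrix.add_apply, hNpq]
    linear_combination (((q : ℂ) - p) / 2) * (hsum.trans htrace)
      + (((p : ℂ) + q) / 2) * (hdiff.symm.trans htraceJ)
  refine ⟨fun _ hj => ?_, fun _ hj => ?_⟩
  · rw [hχQ, hJ, signDiag_apply_of_lt hj]
  · rw [hχQ, hJ, signDiag_apply_of_not_lt hj]; ring
end

section
/- Let B = A⁻¹ E_{rj} J A with J = diag(I_p, −I_q), A ∈ GL_N(ℂ), N = p+q, and r, j both ≤ p or both > p. Writing B₁ for the top-left p×p block and B₄ for the bottom-right q×q block of B, one has 2 tr(B₁) − 2 tr(B₄) = (X + X⁻¹)_{jr} where X = A J A⁻¹ J, and tr(B₁) + tr(B₄) = δ_{rj} if r,j ≤ p and −δ_{rj} if r,j > p. -/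
/-!
With `J = diag(±1)`, the block traces are `tr B₁ + tr B₄ = tr B` and `tr B₁ - tr B₄ = tr (J B)`.
Cyclicity of the trace together with `tr (M E_{rj}) = M_{jr}` gives `tr B = J_{jr}` and
`tr (J B) = (J A J A⁻¹)_{jr} = (X⁻¹)_{jr}`. As `X = (A J A⁻¹) J` is a product of two involutions,
`X⁻¹ = J X J`, and conjugation by `J` does not change the `(j, r)` entry when `j` and `r` lie in the
same block, so `(X⁻¹)_{jr} = X_{jr}`.
-/

open Matrix

namespace Matrix

variable {n R : Type*} [Fintype n] [DecidableEq n] [CommRing R]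

theorem trace_mul_single_mul (M N : Matrix n n R) (r j : n) (c : R) :
    trace (M * single r j c * N) = c * (N * M) j r := by
  rw [Matrix.mul_assoc, trace_mul_comm, Matrix.mul_assoc, trace_single_mul, smul_eq_mul]

theorem inv_conj_mul_eq_of_mul_self_eq_one {J A : Matrix n n R} (hJ : J * J = 1)
    (hA : IsUnit A) : (A * J * A⁻¹ * J)⁻¹ = J * A * J * A⁻¹ := by
  have hA' : IsUnit A.det := (isUnit_iff_isUnit_det A).mp hA
  refine inv_eq_right_inv ?_
  calc A * J * A⁻¹ * J * (J * A * J * A⁻¹)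
      = A * J * (A⁻¹ * (J * J) * A) * J * A⁻¹ := by simp only [Matrix.mul_assoc]
    _ = 1 := by
      rw [hJ, Matrix.mul_one, nonsing_inv_mul A hA', Matrix.mul_one, Matrix.mul_assoc A J J, hJ,
        Matrix.mul_one, mul_nonsing_inv A hA']

variable (P : n → Prop) [DecidablePred P]

def signDiagonal : Matrix n n R := diagonal fun i => if P i then 1 else -1

theorem signDiagonal_mul_self : signDiagonal P * signDiagonal P = (1 : Matrix n n R) := by
  rw [signDiagonal, diagonal_mul_diagonal, ← diagonal_one]
  congr 1
  ext i
  split_ifs <;> simp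

theorem trace_signDiagonal_mul (M : Matrix n n R) :
    trace (signDiagonal P * M) =
      ∑ i ∈ Finset.univ.filter P, M i i - ∑ i ∈ Finset.univ.filter (¬ P ·), M i i := by
  simp only [trace, diag, signDiagonal, diagonal_mul, ite_mul, one_mul, neg_one_mul,
    Finset.sum_ite, Finset.sum_neg_distrib, sub_eq_add_neg]

theorem signDiagonal_mul_mul_signDiagonal_apply (M : Matrix n n R) {i j : n} (h : P i ↔ P j) :
    (signDiagonal P * M * signDiagonal P : Matrix n n R) i j = M i j := by
  by_cases hi : P i <;> simp [signDiagonal, hi, ← h]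

end Matrix

theorem stmt8_general (p N : ℕ)
    (J A X B : Matrix (Fin N) (Fin N) ℂ)
    (hJ : J = Matrix.diagonal (fun i : Fin N => if (i : ℕ) < p then (1 : ℂ) else -1))
    (hA : IsUnit A)
    (hX : X = A * J * A⁻¹ * J)
    (r j : Fin N)
    (hrj : ((r : ℕ) < p ∧ (j : ℕ) < p) ∨ (¬ (r : ℕ) < p ∧ ¬ (j : ℕ) < p))
    (hB : B = A⁻¹ * Matrix.single r j 1 * J * A) :
    (2 * ∑ i ∈ Finset.univ.filter (fun i : Fin N => (i : ℕ) < p), B i i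
      - 2 * ∑ i ∈ Finset.univ.filter (fun i : Fin N => ¬ (i : ℕ) < p), B i i
      = (X + X⁻¹) j r) ∧
    ((r : ℕ) < p → (j : ℕ) < p →
      ∑ i ∈ Finset.univ.filter (fun i : Fin N => (i : ℕ) < p), B i i
      + ∑ i ∈ Finset.univ.filter (fun i : Fin N => ¬ (i : ℕ) < p), B i i
      = (if r = j then 1 else 0)) ∧
    (¬ (r : ℕ) < p → ¬ (j : ℕ) < p →
      ∑ i ∈ Finset.univ.filter (fun i : Fin N => (i : ℕ) < p), B i i
      + ∑ i ∈ Finset.univ.filter (fun i : Fin N => ¬ (i : ℕ) < p), B i i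
      = -(if r = j then 1 else 0)) := by
  have hJS : J = signDiagonal (fun i : Fin N => (i : ℕ) < p) := hJ
  have hJJ : J * J = 1 := by rw [hJS, signDiagonal_mul_self]
  have hXinv : X⁻¹ = J * A * J * A⁻¹ := hX ▸ inv_conj_mul_eq_of_mul_self_eq_one hJJ hA
  have hXinv_apply : X⁻¹ j r = X j r := by
    have hJXJ : J * X * J = X⁻¹ := by
      rw [hXinv, hX]
      simp only [Matrix.mul_assoc, hJJ, Matrix.mul_one]
    have hsame_block : (j : ℕ) < p ↔ (r : ℕ) < p := by tauto
    rw [← hJXJ, hJS, signDiagonal_mul_mul_signDiagonal_apply _ _ hsame_block]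
  have hDiff : ∑ i ∈ Finset.univ.filter (fun i : Fin N => (i : ℕ) < p), B i i
      - ∑ i ∈ Finset.univ.filter (fun i : Fin N => ¬ (i : ℕ) < p), B i i = X j r := by
    rw [← trace_signDiagonal_mul, ← hJS, hB, ← hXinv_apply, hXinv,
      show J * (A⁻¹ * single r j 1 * J * A) = J * A⁻¹ * single r j 1 * (J * A) by
        simp only [Matrix.mul_assoc],
      trace_mul_single_mul, one_mul]
    simp only [Matrix.mul_assoc]
  have hSum : ∑ i ∈ Finset.univ.filter (fun i : Fin N => (i : ℕ) < p), B i i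
      + ∑ i ∈ Finset.univ.filter (fun i : Fin N => ¬ (i : ℕ) < p), B i i = J j r := by
    rw [Finset.sum_filter_add_sum_filter_not, hB, Matrix.mul_assoc _ J A]
    change trace (A⁻¹ * single r j 1 * (J * A)) = _
    rw [trace_mul_single_mul, one_mul, Matrix.mul_assoc,
      mul_nonsing_inv A ((isUnit_iff_isUnit_det A).mp hA), Matrix.mul_one]
  refine ⟨?_, fun _ hj => ?_, fun _ hj => ?_⟩
  · rw [Matrix.add_apply, hXinv_apply, ← hDiff]
    ring
  · rw [hSum, hJ, diagonal_apply, if_pos hj]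
    simp only [@eq_comm _ j r]
  · rw [hSum, hJ, diagonal_apply, if_neg hj]
    simp only [@eq_comm _ j r]
    split_ifs <;> simp

/-- block traces of `B = A⁻¹ E_{rj} J A`:
`2 tr B₁ − 2 tr B₄ = (X + X⁻¹)_{jr}` and `tr B₁ + tr B₄ = ±δ_{rj}`. -/
theorem stmt8 (p q N : ℕ) (hN : N = p + q)
    (J A X B : Matrix (Fin N) (Fin N) ℂ)
    (hJ : J = Matrix.diagonal (fun i : Fin N => if (i : ℕ) < p then (1 : ℂ) else -1))
    (hA : IsUnit A)
    (hX : X = A * J * A⁻¹ * J)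
    (r j : Fin N)
    (hrj : ((r : ℕ) < p ∧ (j : ℕ) < p) ∨ (¬ (r : ℕ) < p ∧ ¬ (j : ℕ) < p))
    (hB : B = A⁻¹ * Matrix.single r j 1 * J * A) :
    (2 * ∑ i ∈ Finset.univ.filter (fun i : Fin N => (i : ℕ) < p), B i i
      - 2 * ∑ i ∈ Finset.univ.filter (fun i : Fin N => ¬ (i : ℕ) < p), B i i
      = (X + X⁻¹) j r) ∧
    ((r : ℕ) < p → (j : ℕ) < p →
      ∑ i ∈ Finset.univ.filter (fun i : Fin N => (i : ℕ) < p), B i i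
      + ∑ i ∈ Finset.univ.filter (fun i : Fin N => ¬ (i : ℕ) < p), B i i
      = (if r = j then 1 else 0)) ∧
    (¬ (r : ℕ) < p → ¬ (j : ℕ) < p →
      ∑ i ∈ Finset.univ.filter (fun i : Fin N => (i : ℕ) < p), B i i
      + ∑ i ∈ Finset.univ.filter (fun i : Fin N => ¬ (i : ℕ) < p), B i i
      = -(if r = j then 1 else 0)) :=
  stmt8_general p N J A X B hJ hA hX r j hrj hB
end

section
/- In the dAHA H(κ₁, κ₂) of type B_n, with ỹ_i = y_i − (κ₂/2)γ_i − (κ₁/2)Σ_{k>i}S_{ik} + (κ₁/2)Σ_{k<i}S_{ik} − (κ₁/2)Σ_{k≠i}S_{ik}γ_iγ_k, for i < j one has [ỹ_i, R_j] + [R_i, ỹ_j] = 0, where R_i = −(κ₁/2)Σ_{k>i}S_{ik} + (κ₁/2)Σ_{k<i}S_{ik} − (κ₁/2)Σ_{k≠i}S_{ik}γ_iγ_k; more precisely [ỹ_i, R_j] = (κ₁/2)(S_{ij}ỹ_j − S_{ij}ỹ_i − S_{ij}ỹ_jγ_iγ_j − S_{ij}ỹ_iγ_iγ_j) and [R_i,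 ỹ_j] = −[ỹ_i, R_j]. -/
/-!
Every summand of `R_j` is a product of generators of `W`, and the covariance relations say that
`ỹ_m` commutes with `S_{ab}` and with `S_{ab}γ_aγ_b` as soon as `m ∉ {a, b}`. So `[ỹ_i, R_j]` only
sees the two summands of `R_j` indexed by `k = i`, and covariance evaluates both. The same two
terms, with `S_{ij}` and `γ_iγ_j` symmetric in `i, j`, give `[ỹ_j, R_i] = [ỹ_i, R_j]`.
-/

open Finset

theorem lie_sum_eq_of_mem {ι L : Type*} [LieRing L] {s : Finset ι} {f : ι → L} {x : L} {a : ι}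
    (ha : a ∈ s) (h : ∀ k ∈ s, k ≠ a → ⁅x, f k⁆ = 0) : ⁅x, ∑ k ∈ s, f k⁆ = ⁅x, f a⁆ := by
  rw [lie_sum]
  exact sum_eq_single_of_mem a ha h

section Covariance

variable {ι A : Type*} [Ring A] {S : ι → ι → A} {γ yt : ι → A}

theorem lie_yt_S_of_ne
    (hSyt' : ∀ i j m, i ≠ j → m ≠ i → m ≠ j → S i j * yt m = yt m * S i j)
    {a b m : ι} (hab : a ≠ b) (hma : m ≠ a) (hmb : m ≠ b) : ⁅yt m, S a b⁆ = 0 := by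
  rw [Ring.lie_def, hSyt' a b m hab hma hmb, sub_self]

theorem lie_yt_S (hSyt : ∀ i j, i ≠ j → S i j * yt i = yt j * S i j) {a b : ι} (hab : a ≠ b) :
    ⁅yt b, S a b⁆ = S a b * (yt a - yt b) := by
  rw [Ring.lie_def, ← hSyt a b hab, mul_sub]

theorem lie_yt_S_mul_γ_mul_γ_of_ne
    (hSyt' : ∀ i j m, i ≠ j → m ≠ i → m ≠ j → S i j * yt m = yt m * S i j)
    (hγyt' : ∀ i j, i ≠ j → γ i * yt j = yt j * γ i)
    {a b m : ι} (hab : a ≠ b) (hma : m ≠ a) (hmb : m ≠ b) : ⁅yt m, S a b * γ a * γ b⁆ = 0 := by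
  refine commute_iff_lie_eq.mp ((Commute.mul_right ?_ ?_).mul_right ?_)
  · exact (hSyt' a b m hab hma hmb).symm
  · exact (hγyt' a m hma.symm).symm
  · exact (hγyt' b m hmb.symm).symm

theorem lie_yt_S_mul_γ_mul_γ (hSyt : ∀ i j, i ≠ j → S i j * yt i = yt j * S i j)
    (hγyt : ∀ i, γ i * yt i = -(yt i * γ i)) (hγyt' : ∀ i j, i ≠ j → γ i * yt j = yt j * γ i)
    {a b : ι} (hab : a ≠ b) :
    ⁅yt b, S a b * γ a * γ b⁆ = S a b * (yt a + yt b) * γ a * γ b := by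
  have hleft : yt b * (S a b * γ a * γ b) = S a b * yt a * γ a * γ b := by
    rw [← mul_assoc, ← mul_assoc, ← hSyt a b hab]
  have hright : S a b * γ a * γ b * yt b = -(S a b * yt b * γ a * γ b) := by
    rw [mul_assoc _ (γ b), hγyt, mul_neg, ← mul_assoc, mul_assoc _ (γ a), hγyt' a b hab]
    simp only [mul_assoc]
  rw [Ring.lie_def, hleft, hright]
  noncomm_ring

end Covariance

section Correction

variable {ι 𝕜 A : Type*} [Fintype ι] [LinearOrder ι] [CommRing 𝕜] [Ring A] [Algebra 𝕜 A]

/-- With `c = κ₁/2` this is the paper's `R_i`, so that `ỹ_i = y_i - (κ₂/2)γ_i + R_i`. -/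
def drinfeldCorrection (c : 𝕜) (S : ι → ι → A) (γ : ι → A) (i : ι) : A :=
  -c • (∑ k ∈ univ.filter (fun k => i < k), S i k) + c • (∑ k ∈ univ.filter (fun k => k < i), S i k)
    - c • (∑ k ∈ univ.filter (fun k => k ≠ i), S i k * γ i * γ k)

attribute [local instance] LieRing.ofAssociativeRing

variable {S : ι → ι → A} {γ yt : ι → A}

theorem lie_drinfeldCorrection (c : 𝕜) (x : A) (i : ι) :
    ⁅x, drinfeldCorrection c S γ i⁆
      = -c • ⁅x, ∑ k ∈ univ.filter (fun k => i < k), S i k⁆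
        + c • ⁅x, ∑ k ∈ univ.filter (fun k => k < i), S i k⁆
        - c • ⁅x, ∑ k ∈ univ.filter (fun k => k ≠ i), S i k * γ i * γ k⁆ := by
  rw [drinfeldCorrection, lie_sub, lie_add]
  simp only [lie_smul (R := 𝕜) (L := A)]

theorem lie_yt_drinfeldCorrection_of_gt
    (hSyt : ∀ i j, i ≠ j → S i j * yt i = yt j * S i j)
    (hSyt' : ∀ i j m, i ≠ j → m ≠ i → m ≠ j → S i j * yt m = yt m * S i j)
    (hγyt : ∀ i, γ i * yt i = -(yt i * γ i)) (hγyt' : ∀ i j, i ≠ j → γ i * yt j = yt j * γ i)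
    (c : 𝕜) {i j : ι} (hij : i < j) :
    ⁅yt j, drinfeldCorrection c S γ i⁆ = c • (S i j * yt j - S i j * yt i
      - S i j * yt j * γ i * γ j - S i j * yt i * γ i * γ j) := by
  have hgt : ⁅yt j, ∑ k ∈ univ.filter (fun k => i < k), S i k⁆ = S i j * (yt i - yt j) := by
    refine (lie_sum_eq_of_mem (a := j) (by simpa using hij) fun k hk hkj => ?_).trans
      (lie_yt_S hSyt hij.ne)
    exact lie_yt_S_of_ne hSyt' (mem_filter.1 hk).2.ne hij.ne' hkj.symm
  have hlt : ⁅yt j, ∑ k ∈ univ.filter (fun k => k < i), S i k⁆ = 0 := by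
    refine (lie_sum _ _ _).trans (sum_eq_zero fun k hk => ?_)
    have hki : k < i := (mem_filter.1 hk).2
    exact lie_yt_S_of_ne hSyt' hki.ne' hij.ne' (hki.trans hij).ne'
  have hγ : ⁅yt j, ∑ k ∈ univ.filter (fun k => k ≠ i), S i k * γ i * γ k⁆
      = S i j * (yt i + yt j) * γ i * γ j := by
    refine (lie_sum_eq_of_mem (a := j) (by simpa using hij.ne') fun k hk hkj => ?_).trans
      (lie_yt_S_mul_γ_mul_γ hSyt hγyt hγyt' hij.ne)
    exact lie_yt_S_mul_γ_mul_γ_of_ne hSyt' hγyt' (mem_filter.1 hk).2.symm hij.ne' hkj.symm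
  rw [lie_drinfeldCorrection, hgt, hlt, hγ, smul_zero, add_zero, neg_smul, ← smul_neg, ← smul_sub]
  noncomm_ring

theorem lie_yt_drinfeldCorrection_of_lt (hSsymm : ∀ i j, S i j = S j i)
    (hγγ : ∀ i j, γ i * γ j = γ j * γ i)
    (hSyt : ∀ i j, i ≠ j → S i j * yt i = yt j * S i j)
    (hSyt' : ∀ i j m, i ≠ j → m ≠ i → m ≠ j → S i j * yt m = yt m * S i j)
    (hγyt : ∀ i, γ i * yt i = -(yt i * γ i)) (hγyt' : ∀ i j, i ≠ j → γ i * yt j = yt j * γ i)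
    (c : 𝕜) {i j : ι} (hij : i < j) :
    ⁅yt i, drinfeldCorrection c S γ j⁆ = c • (S i j * yt j - S i j * yt i
      - S i j * yt j * γ i * γ j - S i j * yt i * γ i * γ j) := by
  have hgt : ⁅yt i, ∑ k ∈ univ.filter (fun k => j < k), S j k⁆ = 0 := by
    refine (lie_sum _ _ _).trans (sum_eq_zero fun k hk => ?_)
    have hjk : j < k := (mem_filter.1 hk).2
    exact lie_yt_S_of_ne hSyt' hjk.ne hij.ne (hij.trans hjk).ne
  have hlt : ⁅yt i, ∑ k ∈ univ.filter (fun k => k < j), S j k⁆ = S i j * (yt j - yt i) := by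
    refine (lie_sum_eq_of_mem (a := i) (by simpa using hij) fun k hk hki => ?_).trans ?_
    · exact lie_yt_S_of_ne hSyt' (mem_filter.1 hk).2.ne' hij.ne hki.symm
    · rw [lie_yt_S hSyt hij.ne', hSsymm]
  have hγ : ⁅yt i, ∑ k ∈ univ.filter (fun k => k ≠ j), S j k * γ j * γ k⁆
      = S i j * (yt j + yt i) * γ i * γ j := by
    refine (lie_sum_eq_of_mem (a := i) (by simpa using hij.ne) fun k hk hki => ?_).trans ?_
    · exact lie_yt_S_mul_γ_mul_γ_of_ne hSyt' hγyt' (mem_filter.1 hk).2.symm hij.ne hki.symm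
    · rw [lie_yt_S_mul_γ_mul_γ hSyt hγyt hγyt' hij.ne', hSsymm, mul_assoc _ (γ j), hγγ, ← mul_assoc]
  rw [lie_drinfeldCorrection, hgt, hlt, hγ, smul_zero, zero_add, ← smul_sub]
  noncomm_ring

end Correction

theorem stmt15_general (n : ℕ) (κ₁ : ℂ)
    {A : Type*} [Ring A] [Algebra ℂ A]
    (S : Fin n → Fin n → A) (γ : Fin n → A) (yt : Fin n → A)
    -- relations of the Weyl group W of type Bₙ among the S_{ij} and γ_i :
    (hSsymm : ∀ i j, S i j = S j i)
    (hγγ : ∀ i j, γ i * γ j = γ j * γ i)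
    -- W-covariance of the Drinfeld generators ỹ :
    (hSyt : ∀ i j, i ≠ j → S i j * yt i = yt j * S i j)
    (hSyt' : ∀ i j m, i ≠ j → m ≠ i → m ≠ j → S i j * yt m = yt m * S i j)
    (hγyt : ∀ i, γ i * yt i = -(yt i * γ i))
    (hγyt' : ∀ i j, i ≠ j → γ i * yt j = yt j * γ i)
    -- the elements R_i :
    (R : Fin n → A)
    (hR : ∀ i, R i
      = - (κ₁ / 2) • (∑ k ∈ Finset.univ.filter (fun k : Fin n => i < k), S i k)
        + (κ₁ / 2) • (∑ k ∈ Finset.univ.filter (fun k : Fin n => k < i), S i k)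
        - (κ₁ / 2) • (∑ k ∈ Finset.univ.filter (fun k : Fin n => k ≠ i),
            S i k * γ i * γ k))
    (i j : Fin n) (hij : i < j) :
    (yt i * R j - R j * yt i
      = (κ₁ / 2) • (S i j * yt j - S i j * yt i
          - S i j * yt j * γ i * γ j - S i j * yt i * γ i * γ j)) ∧
    (R i * yt j - yt j * R i = -(yt i * R j - R j * yt i)) ∧
    ((yt i * R j - R j * yt i) + (R i * yt j - yt j * R i) = 0) := by
  have hRc : drinfeldCorrection (κ₁ / 2) S γ = R := (funext hR).symm
  have hyt_i := lie_yt_drinfeldCorrection_of_lt hSsymm hγγ hSyt hSyt' hγyt hγyt' (κ₁ / 2) hij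
  have hyt_j := lie_yt_drinfeldCorrection_of_gt hSyt hSyt' hγyt hγyt' (κ₁ / 2) hij
  rw [hRc, Ring.lie_def] at hyt_i hyt_j
  have hanti : R i * yt j - yt j * R i = -(yt i * R j - R j * yt i) := by
    rw [hyt_i, ← hyt_j, neg_sub]
  exact ⟨hyt_i, hanti, by rw [hanti, add_neg_cancel]⟩

/-- in the type `B_n` dAHA `H(κ₁,κ₂)`, with
`R_i = −(κ₁/2)Σ_{k>i}S_{ik} + (κ₁/2)Σ_{k<i}S_{ik} − (κ₁/2)Σ_{k≠i}S_{ik}γ_iγ_k`, for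
`i < j` one has `[ỹ_i, R_j] = (κ₁/2)(S_{ij}ỹ_j − S_{ij}ỹ_i − S_{ij}ỹ_jγ_iγ_j
− S_{ij}ỹ_iγ_iγ_j)`, `[R_i, ỹ_j] = −[ỹ_i, R_j]`, hence `[ỹ_i,R_j] + [R_i,ỹ_j] = 0`. -/
theorem stmt15 (n : ℕ) (κ₁ κ₂ : ℂ)
    {A : Type*} [Ring A] [Algebra ℂ A]
    (S : Fin n → Fin n → A) (γ : Fin n → A) (yt : Fin n → A)
    -- relations of the Weyl group W of type Bₙ among the S_{ij} and γ_i :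
    (hS2 : ∀ i j, i ≠ j → S i j * S i j = 1)
    (hSsymm : ∀ i j, S i j = S j i)
    (hγ2 : ∀ i, γ i * γ i = 1)
    (hγγ : ∀ i j, γ i * γ j = γ j * γ i)
    (hSγ : ∀ i j, i ≠ j → S i j * γ i = γ j * S i j)
    (hSγ' : ∀ i j k, i ≠ j → k ≠ i → k ≠ j → S i j * γ k = γ k * S i j)
    (hSS : ∀ i j k, i ≠ j → j ≠ k → i ≠ k → S i j * S j k = S i k * S i j)
    (hSS' : ∀ i j k l, i ≠ j → k ≠ l → i ≠ k → i ≠ l → j ≠ k → j ≠ l →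
      S i j * S k l = S k l * S i j)
    -- W-covariance of the Drinfeld generators ỹ :
    (hSyt : ∀ i j, i ≠ j → S i j * yt i = yt j * S i j)
    (hSyt' : ∀ i j m, i ≠ j → m ≠ i → m ≠ j → S i j * yt m = yt m * S i j)
    (hγyt : ∀ i, γ i * yt i = -(yt i * γ i))
    (hγyt' : ∀ i j, i ≠ j → γ i * yt j = yt j * γ i)
    -- the elements R_i :
    (R : Fin n → A)
    (hR : ∀ i, R i
      = - (κ₁ / 2) • (∑ k ∈ Finset.univ.filter (fun k : Fin n => i < k), S i k)
        + (κ₁ / 2) • (∑ k ∈ Finset.univ.filter (fun k : Fin n => k < i), S i k)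
        - (κ₁ / 2) • (∑ k ∈ Finset.univ.filter (fun k : Fin n => k ≠ i),
            S i k * γ i * γ k))
    (i j : Fin n) (hij : i < j) :
    (yt i * R j - R j * yt i
      = (κ₁ / 2) • (S i j * yt j - S i j * yt i
          - S i j * yt j * γ i * γ j - S i j * yt i * γ i * γ j)) ∧
    (R i * yt j - yt j * R i = -(yt i * R j - R j * yt i)) ∧
    ((yt i * R j - R j * yt i) + (R i * yt j - yt j * R i) = 0) :=
  stmt15_general n κ₁ S γ yt hSsymm hγγ hSyt hSyt' hγyt hγyt' R hR i j hij
end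

section
/- Let N = p+q, J = diag(I_p, −I_q), and let g(Z) be a Laurent polynomial with g(Z) = g(Z⁻¹). For A ∈ GL_N(ℂ) and X = A J A⁻¹ J, the matrix g(X) satisfies Σ_{i≤p} g(X)_{ii} = (tr g(X) + (p−q) g(1))/2 and Σ_{i>p} g(X)_{ii} = (tr g(X) − (p−q) g(1))/2. -/
open Matrix

/-- conjugation by an involution inverts powers -/
lemma aux_conj_zpow {G : Type*} [Group G] (v u : G) (hv : v⁻¹ = v) (hbase : v * u * v = u⁻¹)
    (m : ℤ) : v * u ^ m * v = u ^ (-m) := by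
  have h1 : (MulAut.conj v) (u ^ m) = ((MulAut.conj v) u) ^ m := map_zpow _ _ _
  have h2 : (MulAut.conj v) u = u⁻¹ := by
    simpa [MulAut.conj_apply, hv] using hbase
  have h3 : (MulAut.conj v) (u ^ m) = v * u ^ m * v := by
    simp [MulAut.conj_apply, hv]
  rw [h3, h2] at h1
  rw [h1, _root_.inv_zpow, _root_.zpow_neg]

/-- for a symmetric Laurent polynomial `g` (coefficients `c : ℤ →₀ ℂ` with
`c s = c (−s)`), with `g(X) = Σ_s c_s Xˢ` and `g(1) = Σ_s c_s`, the block traces of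
`g(X)` are `(tr g(X) ± (p−q) g(1))/2`. -/
theorem stmt16 (p q N : ℕ) (hN : N = p + q)
    (J A X : Matrix (Fin N) (Fin N) ℂ)
    (hJ : J = Matrix.diagonal (fun i : Fin N => if (i : ℕ) < p then (1 : ℂ) else -1))
    (hA : IsUnit A)
    (hX : X = A * J * A⁻¹ * J)
    (c : ℤ →₀ ℂ) (hc : ∀ s : ℤ, c s = c (-s))
    (gX : Matrix (Fin N) (Fin N) ℂ) (hgX : gX = c.sum (fun s a => a • X ^ s))
    (g1 : ℂ) (hg1 : g1 = c.sum (fun _ a => a)) :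
    (∑ i ∈ Finset.univ.filter (fun i : Fin N => (i : ℕ) < p), gX i i
      = (Matrix.trace gX + ((p : ℂ) - (q : ℂ)) * g1) / 2) ∧
    (∑ i ∈ Finset.univ.filter (fun i : Fin N => ¬ (i : ℕ) < p), gX i i
      = (Matrix.trace gX - ((p : ℂ) - (q : ℂ)) * g1) / 2) := by
  -- J is an involution
  have hJ2 : J * J = 1 := by
    subst hJ
    have hd : (fun i : Fin N => (if (i : ℕ) < p then (1 : ℂ) else -1)
        * (if (i : ℕ) < p then (1 : ℂ) else -1)) = fun _ => (1 : ℂ) := by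
      funext i
      by_cases h : (i : ℕ) < p <;> simp [h]
    rw [Matrix.diagonal_mul_diagonal, hd, Matrix.diagonal_one]
  have hAdet : IsUnit A.det := (Matrix.isUnit_iff_isUnit_det A).mp hA
  have hAinv : A * A⁻¹ = 1 := Matrix.mul_nonsing_inv A hAdet
  have hAinv' : A⁻¹ * A = 1 := Matrix.nonsing_inv_mul A hAdet
  have hJ2' : ∀ B : Matrix (Fin N) (Fin N) ℂ, J * (J * B) = B := fun B => by
    rw [← Matrix.mul_assoc, hJ2, Matrix.one_mul]
  have hAinv₂ : ∀ B : Matrix (Fin N) (Fin N) ℂ, A * (A⁻¹ * B) = B := fun B => by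
    rw [← Matrix.mul_assoc, hAinv, Matrix.one_mul]
  have hAinv₃ : ∀ B : Matrix (Fin N) (Fin N) ℂ, A⁻¹ * (A * B) = B := fun B => by
    rw [← Matrix.mul_assoc, hAinv', Matrix.one_mul]
  -- units
  set vJ : (Matrix (Fin N) (Fin N) ℂ)ˣ := ⟨J, J, hJ2, hJ2⟩ with hvJ
  have hvJval : (vJ : Matrix (Fin N) (Fin N) ℂ) = J := rfl
  have hvJinv : vJ⁻¹ = vJ := Units.ext rfl
  set uA : (Matrix (Fin N) (Fin N) ℂ)ˣ := ⟨A, A⁻¹, hAinv, hAinv'⟩ with huA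
  set uX : (Matrix (Fin N) (Fin N) ℂ)ˣ := uA * vJ * uA⁻¹ * vJ with huX
  have huXval : (uX : Matrix (Fin N) (Fin N) ℂ) = X := by
    rw [hX, huX]
    rfl
  -- X * J = A * J * A⁻¹
  have hXJ : X * J = A * J * A⁻¹ := by
    rw [hX, Matrix.mul_assoc (A * J * A⁻¹), hJ2, Matrix.mul_one]
  have htrXJ : Matrix.trace (X * J) = Matrix.trace J := by
    rw [hXJ]
    exact Matrix.trace_conj hA J
  -- X * (J * X * J) = 1
  have hXinv : X * (J * X * J) = 1 := by
    simp only [hX, Matrix.mul_assoc, hJ2', hAinv₂, hAinv₃, hJ2, hAinv, Matrix.mul_one]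
  have hbase : vJ * uX * vJ = uX⁻¹ := by
    have huAval : ((uA : (Matrix (Fin N) (Fin N) ℂ)ˣ) : Matrix (Fin N) (Fin N) ℂ) = A := rfl
    have huAinv : ((uA⁻¹ : (Matrix (Fin N) (Fin N) ℂ)ˣ) : Matrix (Fin N) (Fin N) ℂ) = A⁻¹ := rfl
    have h2 : uX * (vJ * uX * vJ) = 1 := by
      apply Units.ext
      simp only [huX, Units.val_mul, Units.val_one, hvJval, huAval, huAinv]
      simp only [Matrix.mul_assoc, hJ2', hAinv₂, hAinv₃, hJ2, hAinv, Matrix.mul_one]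
    exact (inv_eq_of_mul_eq_one_right h2).symm
  have hconj : ∀ m : ℤ, vJ * uX ^ m * vJ = uX ^ (-m) :=
    aux_conj_zpow vJ uX hvJinv hbase
  have hswap : ∀ m : ℤ, vJ * (uX ^ m)⁻¹ = uX ^ m * vJ := by
    intro m
    have := hconj (-m)
    rw [neg_neg] at this
    have hvJ2 : vJ * vJ = 1 := Units.ext hJ2
    rw [show (uX ^ m)⁻¹ = uX ^ (-m) from (_root_.zpow_neg uX m).symm, ← this,
      mul_assoc (vJ * uX ^ (-m)), hvJ2, mul_one]
  -- key trace identity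
  have key : ∀ s : ℤ, Matrix.trace (X ^ s * J) = Matrix.trace J := by
    intro s
    have hcoe : ∀ m : ℤ, X ^ m = ((uX ^ m : (Matrix (Fin N) (Fin N) ℂ)ˣ) :
        Matrix (Fin N) (Fin N) ℂ) := by
      intro m
      rw [Matrix.coe_units_zpow, huXval]
    rcases Int.even_or_odd s with ⟨m, hm⟩ | ⟨m, hm⟩
    · -- s = m + m
      have hu : uX ^ s * vJ = uX ^ m * vJ * (uX ^ m)⁻¹ := by
        rw [mul_assoc, hswap m, ← mul_assoc, ← _root_.zpow_add, ← hm]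
      have heq : X ^ s * J = (↑(uX ^ m) : Matrix (Fin N) (Fin N) ℂ) * J * (↑((uX ^ m)⁻¹) : Matrix (Fin N) (Fin N) ℂ) := by
        rw [hcoe s, ← hvJval, ← Units.val_mul, hu, Units.val_mul, Units.val_mul, hvJval]
      rw [heq, Matrix.trace_units_conj]
    · -- s = 2m + 1
      have hu : uX ^ s * vJ = uX ^ m * (uX * vJ) * (uX ^ m)⁻¹ := by
        rw [mul_assoc (uX ^ m), mul_assoc uX, hswap m, hm]
        rw [show (2 * m + 1 : ℤ) = m + (1 + m) by ring, _root_.zpow_add, _root_.zpow_add, zpow_one]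
        group
      have heq : X ^ s * J = (↑(uX ^ m) : Matrix (Fin N) (Fin N) ℂ) * (X * J) * (↑((uX ^ m)⁻¹) : Matrix (Fin N) (Fin N) ℂ) := by
        rw [hcoe s, ← hvJval, ← Units.val_mul, hu, Units.val_mul, Units.val_mul,
          Units.val_mul, hvJval, huXval]
      rw [heq, Matrix.trace_units_conj, htrXJ]
  -- trace J = p - q
  have htrJ : Matrix.trace J = (p : ℂ) - (q : ℂ) := by
    rw [hJ, Matrix.trace_diagonal]
    rw [Fin.sum_univ_eq_sum_range (fun i => if i < p then (1 : ℂ) else -1) N, hN,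
      Finset.range_eq_Ico, ← Finset.sum_Ico_consecutive _ (Nat.zero_le p) (Nat.le_add_right p q)]
    have h1 : ∑ i ∈ Finset.Ico 0 p, (if i < p then (1 : ℂ) else -1) = (p : ℂ) := by
      rw [Finset.sum_congr rfl (fun i hi => by
        rw [Finset.mem_Ico] at hi
        simp [hi.2] : ∀ i ∈ Finset.Ico 0 p, (if i < p then (1 : ℂ) else -1) = 1)]
      simp
    have h2 : ∑ i ∈ Finset.Ico p (p + q), (if i < p then (1 : ℂ) else -1) = -(q : ℂ) := by
      rw [Finset.sum_congr rfl (fun i hi => by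
        rw [Finset.mem_Ico] at hi
        simp [Nat.not_lt.mpr hi.1] : ∀ i ∈ Finset.Ico p (p + q),
          (if i < p then (1 : ℂ) else -1) = -1)]
      simp
    rw [h1, h2]
    ring
  -- trace (gX * J) = (p - q) * g1
  have htrgXJ : Matrix.trace (gX * J) = ((p : ℂ) - (q : ℂ)) * g1 := by
    rw [hgX, Finsupp.sum, Finset.sum_mul, Matrix.trace_sum]
    have hterm : ∀ s ∈ c.support,
        Matrix.trace (c s • X ^ s * J) = c s * ((p : ℂ) - (q : ℂ)) := by
      intro s _
      rw [Matrix.smul_mul, Matrix.trace_smul, key s, htrJ, smul_eq_mul]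
    rw [Finset.sum_congr rfl hterm, hg1, Finsupp.sum, Finset.mul_sum]
    exact Finset.sum_congr rfl (fun s _ => by ring)
  -- relate trace (gX * J) to block sums
  have hblock : Matrix.trace (gX * J) =
      (∑ i ∈ Finset.univ.filter (fun i : Fin N => (i : ℕ) < p), gX i i)
      - (∑ i ∈ Finset.univ.filter (fun i : Fin N => ¬ (i : ℕ) < p), gX i i) := by
    rw [Matrix.trace]
    have hdiag : ∀ i ∈ (Finset.univ : Finset (Fin N)), (gX * J).diag i
        = (if (i : ℕ) < p then gX i i else -(gX i i)) := by
      intro i _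
      rw [Matrix.diag_apply, hJ, Matrix.mul_diagonal]
      by_cases h : (i : ℕ) < p <;> simp [h]
    rw [Finset.sum_congr rfl hdiag, Finset.sum_ite]
    simp only [Finset.sum_neg_distrib]
    ring
  have htr : Matrix.trace gX =
      (∑ i ∈ Finset.univ.filter (fun i : Fin N => (i : ℕ) < p), gX i i)
      + (∑ i ∈ Finset.univ.filter (fun i : Fin N => ¬ (i : ℕ) < p), gX i i) := by
    rw [Matrix.trace, ← Finset.sum_filter_add_sum_filter_not Finset.univ
      (fun i : Fin N => (i : ℕ) < p)]
    rfl
  constructor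
  · rw [htr]
    have := hblock.symm.trans htrgXJ
    linear_combination (this) / 2
  · rw [htr]
    have := hblock.symm.trans htrgXJ
    linear_combination (-this) / 2
end
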